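/- arXiv:2209.00683 — 7 statements merged into one kernel-verified Lean document; each statement's English description precedes it below -/
import Mathlib

section
/- An element u₀ ∈ U minimizes J over U (i.e., J(u₀) ≤ J(u) for all u ∈ U) if and only if ρ·u₀ + T*(T u₀) − T* θ = 0, where T* : H → U denotes the Hilbert-space adjoint of T. -/
open ContinuousLinearMap

/-!
Expanding the square, `J (u + v) = J u + 2 ⟪r u, v⟫ + ‖T v‖² + ρ ‖v‖²` with
`r u = ρ • u + T* (T u) - T* θ`. If `r u₀ = 0` the remaining term is nonnegative, so `u₀` is a
minimizer. Conversely, along the line `t ↦ u₀ + t • r u₀` the cost is a quadratic in `t` with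
linear coefficient `2 ‖r u₀‖²`, which must vanish at a minimum.
-/

lemma eq_zero_of_forall_nonneg_mul_add_sq_mul {a b : ℝ} (h : ∀ t : ℝ, 0 ≤ t * a + t ^ 2 * b) :
    a = 0 := by
  have hmin : IsLocalMin (fun t : ℝ => t * a + t ^ 2 * b) 0 :=
    Filter.Eventually.of_forall fun t => by simpa using h t
  have hderiv : HasDerivAt (fun t : ℝ => t * a + t ^ 2 * b) a 0 := by
    simpa using ((hasDerivAt_id' (0 : ℝ)).mul_const a).fun_add
      (((hasDerivAt_id' (0 : ℝ)).fun_pow 2).mul_const b)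
  exact hmin.hasDerivAt_eq_zero hderiv

section Tikhonov

variable {U H : Type*} [NormedAddCommGroup U] [InnerProductSpace ℝ U] [CompleteSpace U]
  [NormedAddCommGroup H] [InnerProductSpace ℝ H] [CompleteSpace H]

noncomputable def tikhonovCost (T : U →L[ℝ] H) (ρ : ℝ) (θ : H) (u : U) : ℝ :=
  ‖T u - θ‖ ^ 2 + ρ * ‖u‖ ^ 2

/-- Half the gradient of `tikhonovCost T ρ θ` at `u`. -/
noncomputable def tikhonovResidual (T : U →L[ℝ] H) (ρ : ℝ) (θ : H) (u : U) : U :=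
  ρ • u + adjoint T (T u) - adjoint T θ

lemma tikhonovCost_add (T : U →L[ℝ] H) (ρ : ℝ) (θ : H) (u v : U) :
    tikhonovCost T ρ θ (u + v) = tikhonovCost T ρ θ u
      + 2 * inner ℝ (tikhonovResidual T ρ θ u) v + (‖T v‖ ^ 2 + ρ * ‖v‖ ^ 2) := by
  have hinner :
      inner ℝ (tikhonovResidual T ρ θ u) v = inner ℝ (T u - θ) (T v) + ρ * inner ℝ u v := by
    rw [tikhonovResidual, inner_sub_left, inner_add_left, real_inner_smul_left,
      adjoint_inner_left, adjoint_inner_left, inner_sub_left]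
    ring
  have hshift : T (u + v) - θ = (T u - θ) + T v := by rw [map_add]; abel
  rw [tikhonovCost, tikhonovCost, hshift, norm_add_sq_real, norm_add_sq_real, hinner]
  ring

lemma tikhonovCost_add_smul (T : U →L[ℝ] H) (ρ : ℝ) (θ : H) (u v : U) (t : ℝ) :
    tikhonovCost T ρ θ (u + t • v) = tikhonovCost T ρ θ u
      + t * (2 * inner ℝ (tikhonovResidual T ρ θ u) v) + t ^ 2 * (‖T v‖ ^ 2 + ρ * ‖v‖ ^ 2) := by
  rw [tikhonovCost_add, map_smul, norm_smul, norm_smul, real_inner_smul_right, Real.norm_eq_abs,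
    mul_pow, mul_pow, sq_abs]
  ring

lemma tikhonovResidual_eq_zero_of_forall_le (T : U →L[ℝ] H) (ρ : ℝ) (θ : H) (u₀ : U)
    (hmin : ∀ u, tikhonovCost T ρ θ u₀ ≤ tikhonovCost T ρ θ u) :
    tikhonovResidual T ρ θ u₀ = 0 := by
  set r := tikhonovResidual T ρ θ u₀
  have hquad : ∀ t : ℝ, 0 ≤ t * (2 * inner ℝ r r) + t ^ 2 * (‖T r‖ ^ 2 + ρ * ‖r‖ ^ 2) := by
    intro t
    have hle := hmin (u₀ + t • r)
    rw [tikhonovCost_add_smul] at hle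
    linarith
  simpa using eq_zero_of_forall_nonneg_mul_add_sq_mul hquad

lemma tikhonovCost_le_of_tikhonovResidual_eq_zero (T : U →L[ℝ] H) {ρ : ℝ} (hρ : 0 ≤ ρ)
    (θ : H) {u₀ : U} (hr : tikhonovResidual T ρ θ u₀ = 0) (u : U) :
    tikhonovCost T ρ θ u₀ ≤ tikhonovCost T ρ θ u := by
  have hexpand := tikhonovCost_add T ρ θ u₀ (u - u₀)
  rw [add_sub_cancel, hr, inner_zero_left] at hexpand
  rw [hexpand]
  have hquad : 0 ≤ ‖T (u - u₀)‖ ^ 2 + ρ * ‖u - u₀‖ ^ 2 := by positivity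
  linarith

end Tikhonov

/-- `u₀` minimizes `J u = ‖T u - θ‖² + ρ‖u‖²` over `U` if and only if
`ρ • u₀ + T* (T u₀) - T* θ = 0`, where `T*` is the Hilbert-space adjoint of `T`. -/
theorem minimizer_iff_normal_equation
    {U H : Type*} [NormedAddCommGroup U] [InnerProductSpace ℝ U] [CompleteSpace U]
    [NormedAddCommGroup H] [InnerProductSpace ℝ H] [CompleteSpace H]
    (T : U →L[ℝ] H) (ρ : ℝ) (hρ : 0 < ρ) (θ : H) (u₀ : U) :
    (∀ u : U, ‖T u₀ - θ‖ ^ 2 + ρ * ‖u₀‖ ^ 2 ≤ ‖T u - θ‖ ^ 2 + ρ * ‖u‖ ^ 2) ↔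
      ρ • u₀ + adjoint T (T u₀) - adjoint T θ = 0 :=
  ⟨tikhonovResidual_eq_zero_of_forall_le T ρ θ u₀,
    tikhonovCost_le_of_tikhonovResidual_eq_zero T hρ.le θ⟩
end

section
/- Let θ̂ denote the orthogonal projection of θ onto the closure of the range of T in H, and for each ρ > 0 let u₀(ρ) denote the unique minimizer over U of the functional u ↦ ‖T u − θ‖² + ρ‖u‖². Then ‖T(u₀(ρ)) − θ̂‖ tends to 0 as ρ tends to 0 from the right. -/
open Filter Topology
open scoped InnerProductSpace

/-! Since `θ - θ̂` is orthogonal to the closed range `K` of `T`, Pythagoras gives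
`‖T u - θ‖² = ‖T u - θ̂‖² + ‖θ - θ̂‖²`, so `u₀ ρ` also minimizes `‖T u - θ̂‖² + ρ‖u‖²`.
Comparing with a fixed `u` for which `T u` is close to `θ̂ ∈ K` bounds
`‖T (u₀ ρ) - θ̂‖²` by `‖T u - θ̂‖² + ρ‖u‖²`, which is small for small `ρ`. -/

theorem Submodule.norm_sub_sq_eq_add_of_forall_norm_sub_le {H : Type*} [NormedAddCommGroup H]
    [InnerProductSpace ℝ H] (K : Submodule ℝ H) {θ p : H} (hp : p ∈ K)
    (hmin : ∀ w ∈ K, ‖θ - p‖ ≤ ‖θ - w‖) {v : H} (hv : v ∈ K) :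
    ‖v - θ‖ ^ 2 = ‖v - p‖ ^ 2 + ‖θ - p‖ ^ 2 := by
  have hinf : ‖θ - p‖ = ⨅ w : (K : Set H), ‖θ - w‖ := by
    refine le_antisymm (le_ciInf fun w => hmin w w.2) ?_
    exact ciInf_le ⟨0, Set.forall_mem_range.2 fun _ => norm_nonneg _⟩ (⟨p, hp⟩ : (K : Set H))
  have horth : ⟪v - p, θ - p⟫_ℝ = 0 := by
    rw [real_inner_comm]
    exact (K.norm_eq_iInf_iff_real_inner_eq_zero hp).1 hinf _ (K.sub_mem hv hp)
  rw [show v - θ = (v - p) - (θ - p) by abel, norm_sub_sq_real, horth]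
  ring

theorem tendsto_norm_sub_of_sq_le_sq_add_mul {U H : Type*} [Norm U] [SeminormedAddCommGroup H]
    (f : U → H) {p : H} (hp : p ∈ closure (Set.range f)) (u₀ : ℝ → U)
    (hle : ∀ ρ > 0, ∀ u, ‖f (u₀ ρ) - p‖ ^ 2 ≤ ‖f u - p‖ ^ 2 + ρ * ‖u‖ ^ 2) :
    Tendsto (fun ρ => ‖f (u₀ ρ) - p‖) (𝓝[>] 0) (𝓝 0) := by
  refine tendsto_order.2 ⟨fun a ha => .of_forall fun _ => ha.trans_le (norm_nonneg _),
    fun ε hε => ?_⟩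
  obtain ⟨_, ⟨u, rfl⟩, hu⟩ := Metric.mem_closure_iff.1 hp ε hε
  rw [dist_comm, dist_eq_norm] at hu
  have hbound : Tendsto (fun ρ => ‖f u - p‖ ^ 2 + ρ * ‖u‖ ^ 2) (𝓝[>] 0) (𝓝 (‖f u - p‖ ^ 2)) :=
    (Continuous.tendsto' (by fun_prop) 0 _ (by simp)).mono_left nhdsWithin_le_nhds
  have hsq : ‖f u - p‖ ^ 2 < ε ^ 2 := pow_lt_pow_left₀ hu (norm_nonneg _) two_ne_zero
  filter_upwards [hbound.eventually (gt_mem_nhds hsq), self_mem_nhdsWithin] with ρ hρ hpos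
  exact lt_of_pow_lt_pow_left₀ 2 hε.le ((hle ρ hpos u).trans_lt hρ)

theorem tendsto_min_residual_to_projection_general
    {U H : Type*} [NormedAddCommGroup U] [InnerProductSpace ℝ U]
    [NormedAddCommGroup H] [InnerProductSpace ℝ H]
    (T : U →L[ℝ] H) (θ : H) (θhat : H)
    (hmem : θhat ∈ closure (Set.range fun u : U => T u))
    (hproj : ∀ w ∈ closure (Set.range fun u : U => T u), ‖θ - θhat‖ ≤ ‖θ - w‖)
    (u₀ : ℝ → U)
    (hopt : ∀ ρ : ℝ, 0 < ρ → ∀ u : U,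
      ‖T (u₀ ρ) - θ‖ ^ 2 + ρ * ‖u₀ ρ‖ ^ 2 ≤ ‖T u - θ‖ ^ 2 + ρ * ‖u‖ ^ 2) :
    Tendsto (fun ρ : ℝ => ‖T (u₀ ρ) - θhat‖) (nhdsWithin 0 (Set.Ioi 0)) (nhds 0) := by
  set K : Submodule ℝ H := (LinearMap.range (T : U →ₗ[ℝ] H)).topologicalClosure
  have hpyth (u : U) : ‖T u - θ‖ ^ 2 = ‖T u - θhat‖ ^ 2 + ‖θ - θhat‖ ^ 2 :=
    K.norm_sub_sq_eq_add_of_forall_norm_sub_le hmem hproj (subset_closure ⟨u, rfl⟩)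
  refine tendsto_norm_sub_of_sq_le_sq_add_mul (fun u => T u) hmem u₀ fun ρ hρ u => ?_
  have hρu₀ : 0 ≤ ρ * ‖u₀ ρ‖ ^ 2 := by positivity
  have hcompare := hopt ρ hρ u
  rw [hpyth, hpyth] at hcompare
  linarith

/-- Let `θ̂` be the orthogonal projection of `θ` onto the closure of the range of `T`
(characterized as the closest point of that closed subspace to `θ`), and for each
`ρ > 0` let `u₀ ρ` be the minimizer over `U` of `u ↦ ‖T u - θ‖² + ρ‖u‖²`.
Then `‖T (u₀ ρ) - θ̂‖ → 0` as `ρ → 0⁺`. -/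
theorem tendsto_min_residual_to_projection
    {U H : Type*} [NormedAddCommGroup U] [InnerProductSpace ℝ U] [CompleteSpace U]
    [NormedAddCommGroup H] [InnerProductSpace ℝ H] [CompleteSpace H]
    (T : U →L[ℝ] H) (θ : H) (θhat : H)
    (hmem : θhat ∈ closure (Set.range fun u : U => T u))
    (hproj : ∀ w ∈ closure (Set.range fun u : U => T u), ‖θ - θhat‖ ≤ ‖θ - w‖)
    (u₀ : ℝ → U)
    (hopt : ∀ ρ : ℝ, 0 < ρ → ∀ u : U,
      ‖T (u₀ ρ) - θ‖ ^ 2 + ρ * ‖u₀ ρ‖ ^ 2 ≤ ‖T u - θ‖ ^ 2 + ρ * ‖u‖ ^ 2) :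
    Tendsto (fun ρ : ℝ => ‖T (u₀ ρ) - θhat‖) (nhdsWithin 0 (Set.Ioi 0)) (nhds 0) :=
  tendsto_min_residual_to_projection_general T θ θhat hmem hproj u₀ hopt
end

section
/- Let u₀ be the unique minimizer of J over U and, for each K, let u_K be the unique minimizer of J_K over U. Then J(u_K) → J(u₀) as K → ∞. -/
open Filter

private lemma aux_ineq {a b a₀ b₀ n u ρ t e M : ℝ}
    (ha : 0 ≤ a) (hbb : 0 ≤ b) (ha₀0 : 0 ≤ a₀) (hb0 : 0 ≤ b₀)
    (hn0 : 0 ≤ n) (hu0 : 0 ≤ u) (he0 : 0 ≤ e) (ht0 : 0 ≤ t)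
    (h2 : a - b ≤ e * n) (h3 : b₀ - a₀ ≤ e * u)
    (hb : b ≤ t) (hn : n ≤ M) (hn2 : n ^ 2 ≤ M ^ 2) (ha₀ : a₀ ≤ t)
    (h4 : b ^ 2 + ρ * n ^ 2 ≤ b₀ ^ 2 + ρ * u ^ 2) :
    a ^ 2 + ρ * n ^ 2 ≤
      (a₀ ^ 2 + ρ * u ^ 2) + (2 * t * (M + u) * e + (M ^ 2 + u ^ 2) * (e * e)) := by
  have hen : 0 ≤ e * n := mul_nonneg he0 hn0
  have heu : 0 ≤ e * u := mul_nonneg he0 hu0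
  have step1 : a ^ 2 ≤ b ^ 2 + 2 * b * (e * n) + (e * n) ^ 2 := by
    nlinarith [h2, hen, ha, hbb]
  have step2 : b₀ ^ 2 ≤ a₀ ^ 2 + 2 * a₀ * (e * u) + (e * u) ^ 2 := by
    nlinarith [h3, heu, ha₀0, hb0]
  have t1 : 2 * b * (e * n) ≤ 2 * t * (e * M) := by
    have hbn : b * n ≤ t * M := mul_le_mul hb hn hn0 ht0
    nlinarith [mul_le_mul_of_nonneg_left hbn he0]
  have t2 : (e * n) ^ 2 ≤ e ^ 2 * M ^ 2 := by
    nlinarith [mul_le_mul_of_nonneg_left hn2 (sq_nonneg e)]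
  have t3 : 2 * a₀ * (e * u) ≤ 2 * t * (e * u) := by
    nlinarith [mul_le_mul_of_nonneg_right ha₀ heu]
  ring_nf at step1 step2 h4 t1 t2 t3 ⊢
  linarith [step1, step2, h4, t1, t2, t3]

/-- If `u₀` is the (unique) minimizer of `J u = ‖T u - θ‖² + ρ‖u‖²` over `U` and,
for each `K`, `u_K` is the (unique) minimizer of `J_K u = ‖T_K u - θ‖² + ρ‖u‖²`,
where `‖T u - T_K u‖ ≤ η_K ‖u‖` with `η_K → 0`, then `J (u_K) → J (u₀)`. -/
theorem approx_min_values_tendsto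
    {U H : Type*} [NormedAddCommGroup U] [InnerProductSpace ℝ U] [CompleteSpace U]
    [NormedAddCommGroup H] [InnerProductSpace ℝ H] [CompleteSpace H]
    (T : U →L[ℝ] H) (ρ : ℝ) (hρ : 0 < ρ) (θ : H)
    (TK : ℕ → (U →L[ℝ] H)) (η : ℕ → ℝ)
    (hη : Tendsto η atTop (nhds 0))
    (hbound : ∀ K : ℕ, ∀ u : U, ‖T u - TK K u‖ ≤ η K * ‖u‖)
    (u₀ : U)
    (hu₀ : ∀ u : U, ‖T u₀ - θ‖ ^ 2 + ρ * ‖u₀‖ ^ 2 ≤ ‖T u - θ‖ ^ 2 + ρ * ‖u‖ ^ 2)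
    (uK : ℕ → U)
    (huK : ∀ K : ℕ, ∀ u : U,
      ‖TK K (uK K) - θ‖ ^ 2 + ρ * ‖uK K‖ ^ 2 ≤ ‖TK K u - θ‖ ^ 2 + ρ * ‖u‖ ^ 2) :
    Tendsto (fun K : ℕ => ‖T (uK K) - θ‖ ^ 2 + ρ * ‖uK K‖ ^ 2) atTop
      (nhds (‖T u₀ - θ‖ ^ 2 + ρ * ‖u₀‖ ^ 2)) := by
  set M : ℝ := Real.sqrt (‖θ‖ ^ 2 / ρ) with hMdef
  have hM0 : 0 ≤ M := Real.sqrt_nonneg _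
  have hM2 : M ^ 2 = ‖θ‖ ^ 2 / ρ := Real.sq_sqrt (by positivity)
  set ε : ℕ → ℝ := fun K =>
    2 * ‖θ‖ * (M + ‖u₀‖) * |η K| + (M ^ 2 + ‖u₀‖ ^ 2) * (|η K| * |η K|) with hεdef
  -- the key per-K estimate
  have key : ∀ K : ℕ, ‖T (uK K) - θ‖ ^ 2 + ρ * ‖uK K‖ ^ 2 ≤
      (‖T u₀ - θ‖ ^ 2 + ρ * ‖u₀‖ ^ 2) + ε K := by
    intro K
    set n : ℝ := ‖uK K‖
    set a : ℝ := ‖T (uK K) - θ‖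
    set b : ℝ := ‖TK K (uK K) - θ‖
    set a₀ : ℝ := ‖T u₀ - θ‖
    set b₀ : ℝ := ‖TK K u₀ - θ‖
    set e : ℝ := |η K|
    have he0 : 0 ≤ e := abs_nonneg _
    have hn0 : 0 ≤ n := norm_nonneg _
    have hb0 : 0 ≤ b := norm_nonneg _
    have ha0 : 0 ≤ a₀ := norm_nonneg _
    have hu00 : 0 ≤ ‖u₀‖ := norm_nonneg _
    -- comparison of norms
    have h2 : |a - b| ≤ e * n := by
      calc |a - b| ≤ ‖(T (uK K) - θ) - (TK K (uK K) - θ)‖ := abs_norm_sub_norm_le _ _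
        _ = ‖T (uK K) - TK K (uK K)‖ := by rw [sub_sub_sub_cancel_right]
        _ ≤ η K * n := hbound K (uK K)
        _ ≤ e * n := mul_le_mul_of_nonneg_right (le_abs_self _) hn0
    have h3 : |a₀ - b₀| ≤ e * ‖u₀‖ := by
      calc |a₀ - b₀| ≤ ‖(T u₀ - θ) - (TK K u₀ - θ)‖ := abs_norm_sub_norm_le _ _
        _ = ‖T u₀ - TK K u₀‖ := by rw [sub_sub_sub_cancel_right]
        _ ≤ η K * ‖u₀‖ := hbound K u₀
        _ ≤ e * ‖u₀‖ := mul_le_mul_of_nonneg_right (le_abs_self _) hu00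
    -- J_K(u_K) ≤ J_K(0) = ‖θ‖²
    have h1 : b ^ 2 + ρ * n ^ 2 ≤ ‖θ‖ ^ 2 := by
      have := huK K 0
      simpa using this
    have hb : b ≤ ‖θ‖ := by nlinarith [norm_nonneg θ]
    have hn2 : n ^ 2 ≤ M ^ 2 := by
      rw [hM2]; rw [le_div_iff₀ hρ]; nlinarith
    have hn : n ≤ M := by nlinarith
    have ha₀ : a₀ ≤ ‖θ‖ := by
      have := hu₀ 0
      simp only [map_zero, zero_sub, norm_neg, norm_zero] at this
      nlinarith [norm_nonneg θ, norm_nonneg (T u₀ - θ), sq_nonneg ‖u₀‖]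
    have h4 : b ^ 2 + ρ * n ^ 2 ≤ b₀ ^ 2 + ρ * ‖u₀‖ ^ 2 := huK K u₀
    have habs2 : a - b ≤ e * n := (abs_le.mp h2).2
    have habs3 : b₀ - a₀ ≤ e * ‖u₀‖ := by
      have := (abs_le.mp h3).1; linarith
    -- chain
    have hεK : ε K = 2 * ‖θ‖ * (M + ‖u₀‖) * e + (M ^ 2 + ‖u₀‖ ^ 2) * (e * e) := rfl
    rw [hεK]
    exact aux_ineq (norm_nonneg _) hb0 ha0 (norm_nonneg _) hn0 hu00 he0 (norm_nonneg θ)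
      habs2 habs3 hb hn hn2 ha₀ h4
  have hεto : Tendsto ε atTop (nhds 0) := by
    have habs : Tendsto (fun K => |η K|) atTop (nhds 0) := by
      simpa using hη.abs
    have h1 : Tendsto (fun K => 2 * ‖θ‖ * (M + ‖u₀‖) * |η K|) atTop (nhds 0) := by
      simpa only [mul_zero] using habs.const_mul (2 * ‖θ‖ * (M + ‖u₀‖))
    have h2 : Tendsto (fun K => (M ^ 2 + ‖u₀‖ ^ 2) * (|η K| * |η K|)) atTop (nhds 0) := by
      simpa only [mul_zero, zero_mul] using ((habs.mul habs).const_mul (M ^ 2 + ‖u₀‖ ^ 2))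
    rw [hεdef]
    simpa only [add_zero] using h1.add h2
  refine tendsto_of_tendsto_of_tendsto_of_le_of_le (g := fun _ => ‖T u₀ - θ‖ ^ 2 + ρ * ‖u₀‖ ^ 2)
    (h := fun K => (‖T u₀ - θ‖ ^ 2 + ρ * ‖u₀‖ ^ 2) + ε K) tendsto_const_nhds ?_ ?_ ?_
  · simpa using (tendsto_const_nhds (x := ‖T u₀ - θ‖ ^ 2 + ρ * ‖u₀‖ ^ 2)).add hεto
  · exact fun K => hu₀ (uK K)
  · exact key
end

section
/- Let u₀ be the unique minimizer of J over U and, for each K, let u_K be the unique minimizer of J_K over U. Then u_K → u₀ in the norm of U as K → ∞. -/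
/-!
By the parallelogram law, `J u = ‖T u - θ‖² + ρ‖u‖²` is strongly midpoint convex with modulus
`ρ / 4`, so at its minimizer `ρ / 2 ‖v - u₀‖² ≤ J v - J u₀`; it therefore suffices to show
`J u_K → J u₀`. Testing the minimality of `u_K` against `0` gives the uniform bound
`‖u_K‖ ≤ ‖θ‖ / √ρ`, and comparing `J` with `J_K` at `u_K` and at `u₀` then gives
`J u_K ≤ J u₀ + O(|η_K|)`.
-/

open Filter Topology

section StrongMidpointConvexity

variable {E : Type*} [SeminormedAddCommGroup E] [NormedSpace ℝ E]

def StrongMidpointConvex (c : ℝ) (f : E → ℝ) : Prop :=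
  ∀ a b, f (midpoint ℝ a b) + c * ‖a - b‖ ^ 2 ≤ (f a + f b) / 2

theorem StrongMidpointConvex.two_mul_sq_norm_sub_le {f : E → ℝ} {c : ℝ}
    (hf : StrongMidpointConvex c f) {u₀ : E} (hmin : ∀ u, f u₀ ≤ f u) (v : E) :
    2 * c * ‖v - u₀‖ ^ 2 ≤ f v - f u₀ := by
  linarith [hf v u₀, hmin (midpoint ℝ v u₀)]

theorem StrongMidpointConvex.tendsto_of_tendsto_apply {ι : Type*} {l : Filter ι}
    {f : E → ℝ} {c : ℝ} (hf : StrongMidpointConvex c f) (hc : 0 < c) {u₀ : E}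
    (hmin : ∀ u, f u₀ ≤ f u) {x : ι → E} (hx : Tendsto (fun i => f (x i)) l (𝓝 (f u₀))) :
    Tendsto x l (𝓝 u₀) := by
  have hsq : Tendsto (fun i => ‖x i - u₀‖ ^ 2) l (𝓝 0) := by
    have hgap : Tendsto (fun i => (f (x i) - f u₀) / (2 * c)) l (𝓝 0) := by
      simpa using (hx.sub_const (f u₀)).div_const (2 * c)
    refine squeeze_zero (fun i => by positivity) (fun i => ?_) hgap
    rw [le_div_iff₀ (by positivity), mul_comm]
    exact hf.two_mul_sq_norm_sub_le hmin (x i)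
  rw [tendsto_iff_norm_sub_tendsto_zero]
  simpa [Real.sqrt_sq (norm_nonneg _)] using hsq.sqrt

end StrongMidpointConvexity

theorem sq_norm_le_sq_norm_add_of_norm_sub_le {E : Type*} [SeminormedAddCommGroup E]
    {a b : E} {d B : ℝ} (hab : ‖a - b‖ ≤ d) (hb : ‖b‖ ≤ B) :
    ‖a‖ ^ 2 ≤ ‖b‖ ^ 2 + d * (2 * B + d) := by
  have ha : ‖a‖ ≤ ‖b‖ + d := by
    simpa using (norm_le_insert' a b).trans (by linarith)
  nlinarith [norm_nonneg a, norm_nonneg b, (norm_nonneg _).trans hab]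

theorem norm_midpoint_sq_add {E : Type*} [NormedAddCommGroup E] [InnerProductSpace ℝ E]
    (x y : E) :
    ‖midpoint ℝ x y‖ ^ 2 + ‖x - y‖ ^ 2 / 4 = (‖x‖ ^ 2 + ‖y‖ ^ 2) / 2 := by
  have := parallelogram_law_with_norm ℝ x y
  rw [midpoint_eq_smul_add, norm_smul, invOf_eq_inv]
  norm_num
  nlinarith

section Tikhonov

variable {U H : Type*} [NormedAddCommGroup U] [InnerProductSpace ℝ U]
  [NormedAddCommGroup H] [InnerProductSpace ℝ H]

noncomputable def tikhonov (T : U →L[ℝ] H) (ρ : ℝ) (θ : H) (u : U) : ℝ :=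
  ‖T u - θ‖ ^ 2 + ρ * ‖u‖ ^ 2

theorem strongMidpointConvex_tikhonov (T : U →L[ℝ] H) (ρ : ℝ) (θ : H) :
    StrongMidpointConvex (ρ / 4) (tikhonov T ρ θ) := by
  intro a b
  have hT : T (midpoint ℝ a b) - θ = midpoint ℝ (T a - θ) (T b - θ) := by
    simp only [midpoint_eq_smul_add, invOf_eq_inv, map_smul, map_add]
    module
  have hU := norm_midpoint_sq_add a b
  have hH := norm_midpoint_sq_add (T a - θ) (T b - θ)
  have hρU :
      ρ * ‖midpoint ℝ a b‖ ^ 2 + ρ / 4 * ‖a - b‖ ^ 2 = ρ * (‖a‖ ^ 2 + ‖b‖ ^ 2) / 2 := by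
    linear_combination ρ * hU
  unfold tikhonov
  rw [hT]
  nlinarith [sq_nonneg ‖T a - θ - (T b - θ)‖]

theorem tikhonov_le_add_of_norm_sub_le {S S' : U →L[ℝ] H} {ρ : ℝ} {θ : H} {u : U} {d B : ℝ}
    (hd : ‖S u - S' u‖ ≤ d) (hB : ‖S' u - θ‖ ≤ B) :
    tikhonov S ρ θ u ≤ tikhonov S' ρ θ u + d * (2 * B + d) := by
  have h := sq_norm_le_sq_norm_add_of_norm_sub_le (a := S u - θ) (d := d)
    (by rwa [sub_sub_sub_cancel_right]) hB
  unfold tikhonov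
  linarith

theorem norm_le_of_forall_tikhonov_le {T : U →L[ℝ] H} {ρ : ℝ} {θ : H} {u : U}
    (hρ : 0 < ρ) (hmin : ∀ v, tikhonov T ρ θ u ≤ tikhonov T ρ θ v) :
    ‖T u - θ‖ ≤ ‖θ‖ ∧ ‖u‖ ≤ ‖θ‖ / √ρ := by
  have h := hmin 0
  simp only [tikhonov, map_zero, zero_sub, norm_neg, norm_zero] at h
  constructor
  · nlinarith [norm_nonneg (T u - θ), norm_nonneg θ, norm_nonneg u]
  · rw [le_div_iff₀ (by positivity), ← pow_le_pow_iff_left₀ (by positivity) (norm_nonneg θ)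
      two_ne_zero, mul_pow, Real.sq_sqrt hρ.le]
    nlinarith [norm_nonneg (T u - θ)]

theorem tikhonov_le_add_of_perturbed_minimizer {T S : U →L[ℝ] H} {ρ : ℝ} {θ : H} {u₀ v : U}
    {d d₀ B : ℝ} (hmin : ∀ u, tikhonov S ρ θ v ≤ tikhonov S ρ θ u)
    (hv : ‖T v - S v‖ ≤ d) (hB : ‖S v - θ‖ ≤ B) (hu₀ : ‖S u₀ - T u₀‖ ≤ d₀) :
    tikhonov T ρ θ v ≤
      tikhonov T ρ θ u₀ + d * (2 * B + d) + d₀ * (2 * ‖T u₀ - θ‖ + d₀) := by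
  linarith [tikhonov_le_add_of_norm_sub_le (ρ := ρ) hv hB, hmin u₀,
    tikhonov_le_add_of_norm_sub_le (ρ := ρ) (θ := θ) hu₀ le_rfl]

end Tikhonov

theorem approx_minimizers_tendsto_general
    {U H : Type*} [NormedAddCommGroup U] [InnerProductSpace ℝ U]
    [NormedAddCommGroup H] [InnerProductSpace ℝ H]
    (T : U →L[ℝ] H) (ρ : ℝ) (hρ : 0 < ρ) (θ : H)
    (TK : ℕ → (U →L[ℝ] H)) (η : ℕ → ℝ)
    (hη : Tendsto η atTop (nhds 0))
    (hbound : ∀ K : ℕ, ∀ u : U, ‖T u - TK K u‖ ≤ η K * ‖u‖)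
    (u₀ : U)
    (hu₀ : ∀ u : U, ‖T u₀ - θ‖ ^ 2 + ρ * ‖u₀‖ ^ 2 ≤ ‖T u - θ‖ ^ 2 + ρ * ‖u‖ ^ 2)
    (uK : ℕ → U)
    (huK : ∀ K : ℕ, ∀ u : U,
      ‖TK K (uK K) - θ‖ ^ 2 + ρ * ‖uK K‖ ^ 2 ≤ ‖TK K u - θ‖ ^ 2 + ρ * ‖u‖ ^ 2) :
    Tendsto uK atTop (nhds u₀) := by
  set M := ‖θ‖ / √ρ
  set gap : ℝ → ℝ := fun t =>
    t * M * (2 * ‖θ‖ + t * M) + t * ‖u₀‖ * (2 * ‖T u₀ - θ‖ + t * ‖u₀‖)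
  have hgap : ∀ K, tikhonov T ρ θ (uK K) ≤ tikhonov T ρ θ u₀ + gap |η K| := by
    intro K
    obtain ⟨hres, hnorm⟩ := norm_le_of_forall_tikhonov_le hρ (huK K)
    have hv : ‖T (uK K) - TK K (uK K)‖ ≤ |η K| * M :=
      (hbound K _).trans (mul_le_mul (le_abs_self _) hnorm (norm_nonneg _) (abs_nonneg _))
    have hu : ‖TK K u₀ - T u₀‖ ≤ |η K| * ‖u₀‖ := by
      rw [norm_sub_rev]
      exact (hbound K u₀).trans (by gcongr; exact le_abs_self _)
    linarith [tikhonov_le_add_of_perturbed_minimizer (huK K) hv hres hu]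
  have hgap_tendsto : Tendsto (fun K => gap |η K|) atTop (𝓝 0) :=
    ((by fun_prop : Continuous gap).tendsto' 0 0 (by simp [gap])).comp (by simpa using hη.abs)
  refine (strongMidpointConvex_tikhonov T ρ θ).tendsto_of_tendsto_apply (by positivity) hu₀ ?_
  exact tendsto_of_tendsto_of_tendsto_of_le_of_le tendsto_const_nhds
    (by simpa using tendsto_const_nhds.add hgap_tendsto) (fun K => hu₀ (uK K)) hgap

/-- If `u₀` is the (unique) minimizer of `J u = ‖T u - θ‖² + ρ‖u‖²` over `U` and,
for each `K`, `u_K` is the (unique) minimizer of `J_K u = ‖T_K u - θ‖² + ρ‖u‖²`,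
where `‖T u - T_K u‖ ≤ η_K ‖u‖` with `η_K → 0`, then `u_K → u₀` in the norm of `U`. -/
theorem approx_minimizers_tendsto
    {U H : Type*} [NormedAddCommGroup U] [InnerProductSpace ℝ U] [CompleteSpace U]
    [NormedAddCommGroup H] [InnerProductSpace ℝ H] [CompleteSpace H]
    (T : U →L[ℝ] H) (ρ : ℝ) (hρ : 0 < ρ) (θ : H)
    (TK : ℕ → (U →L[ℝ] H)) (η : ℕ → ℝ)
    (hη : Tendsto η atTop (nhds 0))
    (hbound : ∀ K : ℕ, ∀ u : U, ‖T u - TK K u‖ ≤ η K * ‖u‖)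
    (u₀ : U)
    (hu₀ : ∀ u : U, ‖T u₀ - θ‖ ^ 2 + ρ * ‖u₀‖ ^ 2 ≤ ‖T u - θ‖ ^ 2 + ρ * ‖u‖ ^ 2)
    (uK : ℕ → U)
    (huK : ∀ K : ℕ, ∀ u : U,
      ‖TK K (uK K) - θ‖ ^ 2 + ρ * ‖uK K‖ ^ 2 ≤ ‖TK K u - θ‖ ^ 2 + ρ * ‖u‖ ^ 2) :
    Tendsto uK atTop (nhds u₀) :=
  approx_minimizers_tendsto_general T ρ hρ θ TK η hη hbound u₀ hu₀ uK huK
end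

section
/- Let S ⊆ U be a nonempty, closed, convex, and bounded set. Let u_c be the unique minimizer of J over S and, for each K, let u_c^K be the unique minimizer of J_K over S. Then u_c^K → u_c in the norm of U as K → ∞. -/
open Filter

lemma midpoint_norm_sq_aux {H : Type*} [NormedAddCommGroup H] [InnerProductSpace ℝ H]
    (a b : H) :
    ‖(1/2 : ℝ) • a + (1/2 : ℝ) • b‖ ^ 2 = ‖a‖ ^ 2 / 2 + ‖b‖ ^ 2 / 2 - ‖a - b‖ ^ 2 / 4 := by
  have hpar := parallelogram_law_with_norm ℝ a b
  have h1 : (1/2 : ℝ) • a + (1/2 : ℝ) • b = (1/2 : ℝ) • (a + b) := by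
    rw [smul_add]
  have h2 : ‖(1/2 : ℝ) • (a + b)‖ = (1/2 : ℝ) * ‖a + b‖ := by
    rw [norm_smul]; norm_num
  rw [h1, h2]
  nlinarith [norm_nonneg (a + b), norm_nonneg (a - b)]

/-- Let `S ⊆ U` be nonempty, closed, convex and bounded. If `u_c` is the (unique)
minimizer over `S` of `J u = ‖T u - θ‖² + ρ‖u‖²` and, for each `K`, `u_c^K` is the
(unique) minimizer over `S` of `J_K u = ‖T_K u - θ‖² + ρ‖u‖²`, where
`‖T u - T_K u‖ ≤ η_K ‖u‖` with `η_K → 0`, then `u_c^K → u_c` in the norm of `U`. -/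
theorem constrained_approx_minimizers_tendsto
    {U H : Type*} [NormedAddCommGroup U] [InnerProductSpace ℝ U] [CompleteSpace U]
    [NormedAddCommGroup H] [InnerProductSpace ℝ H] [CompleteSpace H]
    (T : U →L[ℝ] H) (ρ : ℝ) (hρ : 0 < ρ) (θ : H)
    (TK : ℕ → (U →L[ℝ] H)) (η : ℕ → ℝ)
    (hη : Tendsto η atTop (nhds 0))
    (hbound : ∀ K : ℕ, ∀ u : U, ‖T u - TK K u‖ ≤ η K * ‖u‖)
    (S : Set U) (hS : S.Nonempty) (hSclosed : IsClosed S) (hSconv : Convex ℝ S)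
    (hSbdd : Bornology.IsBounded S)
    (uc : U) (hucS : uc ∈ S)
    (huc : ∀ u ∈ S, ‖T uc - θ‖ ^ 2 + ρ * ‖uc‖ ^ 2 ≤ ‖T u - θ‖ ^ 2 + ρ * ‖u‖ ^ 2)
    (ucK : ℕ → U) (hucKS : ∀ K : ℕ, ucK K ∈ S)
    (hucK : ∀ K : ℕ, ∀ u ∈ S,
      ‖TK K (ucK K) - θ‖ ^ 2 + ρ * ‖ucK K‖ ^ 2 ≤ ‖TK K u - θ‖ ^ 2 + ρ * ‖u‖ ^ 2) :
    Tendsto ucK atTop (nhds uc) := by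
  -- bound on S
  obtain ⟨M₀, hM₀⟩ := (isBounded_iff_forall_norm_le).1 hSbdd
  set M : ℝ := max M₀ 0 with hMdef
  have hM0 : 0 ≤ M := le_max_right _ _
  have hM : ∀ u ∈ S, ‖u‖ ≤ M := fun u hu => (hM₀ u hu).trans (le_max_left _ _)
  set C : ℝ := ‖T‖ * M + ‖θ‖ with hCdef
  have hC0 : 0 ≤ C := add_nonneg (mul_nonneg (norm_nonneg _) hM0) (norm_nonneg _)
  have hTC : ∀ u ∈ S, ‖T u - θ‖ ≤ C := by
    intro u hu
    calc ‖T u - θ‖ ≤ ‖T u‖ + ‖θ‖ := norm_sub_le _ _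
      _ ≤ ‖T‖ * ‖u‖ + ‖θ‖ := by gcongr; exact T.le_opNorm u
      _ ≤ ‖T‖ * M + ‖θ‖ := by gcongr; exact hM u hu
  set ε : ℕ → ℝ := fun K => |η K| * M * (2 * C + |η K| * M) with hεdef
  have hε0 : ∀ K, 0 ≤ ε K := by
    intro K
    have h1 : 0 ≤ |η K| * M := mul_nonneg (abs_nonneg _) hM0
    exact mul_nonneg h1 (by positivity)
  -- difference of the two cost functionals on S
  have hdiff : ∀ K : ℕ, ∀ u ∈ S, |‖T u - θ‖ ^ 2 - ‖TK K u - θ‖ ^ 2| ≤ ε K := by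
    intro K u hu
    set a := T u - θ
    set b := TK K u - θ
    have hab : ‖a - b‖ ≤ |η K| * M := by
      have h1 : a - b = T u - TK K u := sub_sub_sub_cancel_right _ _ θ
      rw [h1]
      calc ‖T u - TK K u‖ ≤ η K * ‖u‖ := hbound K u
        _ ≤ |η K| * M := by
            have := le_abs_self (η K)
            have hn := norm_nonneg u
            nlinarith [hM u hu, abs_nonneg (η K)]
    have ha : ‖a‖ ≤ C := hTC u hu
    have hb : ‖b‖ ≤ C + |η K| * M := by
      have h := norm_sub_le a (a - b)
      have h2 : a - (a - b) = b := by abel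
      rw [h2] at h
      linarith
    have habs : |‖a‖ - ‖b‖| ≤ ‖a - b‖ := abs_norm_sub_norm_le a b
    rw [abs_le] at habs ⊢
    have hsum0 : (0:ℝ) ≤ ‖a‖ + ‖b‖ := add_nonneg (norm_nonneg a) (norm_nonneg b)
    have hsum : ‖a‖ + ‖b‖ ≤ 2 * C + |η K| * M := by linarith
    have h1 : (‖a‖ - ‖b‖) * (‖a‖ + ‖b‖) ≤ ‖a - b‖ * (2 * C + |η K| * M) :=
      mul_le_mul habs.2 hsum hsum0 (norm_nonneg _)
    have h1' : (‖b‖ - ‖a‖) * (‖a‖ + ‖b‖) ≤ ‖a - b‖ * (2 * C + |η K| * M) :=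
      mul_le_mul (by linarith [habs.1]) hsum hsum0 (norm_nonneg _)
    have h2 : ‖a - b‖ * (2 * C + |η K| * M) ≤ |η K| * M * (2 * C + |η K| * M) :=
      mul_le_mul_of_nonneg_right hab (by positivity)
    simp only [hεdef]
    constructor <;> nlinarith
  -- J (ucK K) ≤ J uc + 2 ε K
  have hJ : ∀ K : ℕ, ‖T (ucK K) - θ‖ ^ 2 + ρ * ‖ucK K‖ ^ 2
      ≤ ‖T uc - θ‖ ^ 2 + ρ * ‖uc‖ ^ 2 + 2 * ε K := by
    intro K
    have h1 := hdiff K (ucK K) (hucKS K)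
    have h2 := hdiff K uc hucS
    have h3 := hucK K uc hucS
    rw [abs_le] at h1 h2
    linarith [h1.1, h1.2, h2.1, h2.2]
  -- strong convexity at the midpoint
  have key : ∀ K : ℕ, ρ * ‖ucK K - uc‖ ^ 2 ≤ 8 * ε K := by
    intro K
    set m : U := (1/2 : ℝ) • uc + (1/2 : ℝ) • ucK K with hmdef
    have hmS : m ∈ S := hSconv hucS (hucKS K) (by norm_num) (by norm_num) (by norm_num)
    have hmin := huc m hmS
    have hTm : T m - θ = (1/2 : ℝ) • (T uc - θ) + (1/2 : ℝ) • (T (ucK K) - θ) := by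
      simp only [hmdef, map_add, map_smul]
      module
    have e1 : ‖T m - θ‖ ^ 2 = ‖T uc - θ‖ ^ 2 / 2 + ‖T (ucK K) - θ‖ ^ 2 / 2
        - ‖(T uc - θ) - (T (ucK K) - θ)‖ ^ 2 / 4 := by
      rw [hTm]; exact midpoint_norm_sq_aux _ _
    have e2 : ‖m‖ ^ 2 = ‖uc‖ ^ 2 / 2 + ‖ucK K‖ ^ 2 / 2 - ‖uc - ucK K‖ ^ 2 / 4 := by
      rw [hmdef]; exact midpoint_norm_sq_aux _ _
    have hnormsym : ‖ucK K - uc‖ = ‖uc - ucK K‖ := norm_sub_rev _ _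
    have hJK := hJ K
    rw [hnormsym]
    nlinarith [sq_nonneg ‖(T uc - θ) - (T (ucK K) - θ)‖]
  -- ε K → 0
  have hεlim : Tendsto ε atTop (nhds 0) := by
    have h1 : Tendsto (fun K => |η K| * M) atTop (nhds 0) := by
      simpa using hη.abs.mul_const M
    have h2 : Tendsto (fun K => 2 * C + |η K| * M) atTop (nhds (2 * C + 0)) :=
      tendsto_const_nhds.add h1
    simpa [hεdef] using h1.mul h2
  -- squeeze
  have hle : ∀ K, ‖ucK K - uc‖ ^ 2 ≤ (8 / ρ) * ε K := by
    intro K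
    have := key K
    rw [div_mul_eq_mul_div, le_div_iff₀ hρ]
    nlinarith
  have hlim2 : Tendsto (fun K => (8 / ρ) * ε K) atTop (nhds 0) := by
    simpa using hεlim.const_mul (8 / ρ)
  have hsq : Tendsto (fun K => ‖ucK K - uc‖ ^ 2) atTop (nhds 0) :=
    squeeze_zero (fun K => sq_nonneg _) hle hlim2
  have hn : Tendsto (fun K => ‖ucK K - uc‖) atTop (nhds 0) := by
    have h := (Real.continuous_sqrt.tendsto 0).comp hsq
    simpa [Function.comp_def, Real.sqrt_sq_eq_abs, abs_norm, Real.sqrt_zero] using h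
  rw [tendsto_iff_norm_sub_tendsto_zero]
  exact hn
end

section
/- The matrix ρ·I + G is invertible for every real ρ > 0, and the function u : [0,t_F] → ℝ^m defined by u(τ) = F(τ) · (ρ·I + G)⁻¹ · θ̄ satisfies, for every τ ∈ [0,t_F], the optimality equation ρ·u(τ) + F(τ) · ( ∫₀^{t_F} F(σ)ᵀ · u(σ) dσ − θ̄ ) = 0, where θ̄ ∈ ℝⁿ is an arbitrary fixed vector. -/
/-!
`G` is the Gram matrix of the continuous family `F`, so `xᵀ G x = ∫ |F(τ) x|² ≥ 0` and `ρI + G` is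
positive definite, hence invertible. With `v = (ρI + G)⁻¹ θ̄` and `u = F v` one has
`∫ Fᵀ u = G v`, so the left-hand side of the optimality equation is `F(τ) ((ρI + G) v − θ̄) = 0`.
-/

open MeasureTheory intervalIntegral Matrix

/-- `F(τ) = Mᵀ · exp(Aᵀ(t_F − τ))`. -/
noncomputable def Fmat {n m : ℕ} (A : Matrix (Fin n) (Fin n) ℝ)
    (M : Matrix (Fin n) (Fin m) ℝ) (t_F τ : ℝ) : Matrix (Fin m) (Fin n) ℝ :=
  Mᵀ * NormedSpace.exp ((t_F - τ) • Aᵀ)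

/-- `G = ∫₀^{t_F} F(τ)ᵀ F(τ) dτ` (entrywise integral). -/
noncomputable def Gmat {n m : ℕ} (A : Matrix (Fin n) (Fin n) ℝ)
    (M : Matrix (Fin n) (Fin m) ℝ) (t_F : ℝ) : Matrix (Fin n) (Fin n) ℝ :=
  Matrix.of fun k l => ∫ τ in (0 : ℝ)..t_F, ((Fmat A M t_F τ)ᵀ * Fmat A M t_F τ) k l

section GramIntegral

variable {m n : Type*} [Fintype m]

theorem dotProduct_intervalIntegral [Fintype n] {a b : ℝ} (x : n → ℝ) (g : ℝ → n → ℝ)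
    (hg : ∀ k, IntervalIntegrable (fun σ => g σ k) volume a b) :
    x ⬝ᵥ (fun k => ∫ σ in a..b, g σ k) = ∫ σ in a..b, x ⬝ᵥ g σ := by
  simp only [dotProduct, ← intervalIntegral.integral_const_mul]
  rw [integral_finsetSum fun k _ => (hg k).const_mul (x k)]

noncomputable def gramIntegral (F : ℝ → Matrix m n ℝ) (a b : ℝ) : Matrix n n ℝ :=
  Matrix.of fun k l => ∫ τ in a..b, ((F τ)ᵀ * F τ) k l

variable {F : ℝ → Matrix m n ℝ} {a b : ℝ}

theorem isHermitian_gramIntegral : (gramIntegral F a b).IsHermitian := by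
  ext k l
  simp only [conjTranspose_apply, star_trivial, gramIntegral, of_apply]
  congr 1 with τ
  simp only [mul_apply, transpose_apply, mul_comm]

variable [Fintype n]

theorem gramIntegral_mulVec (hF : Continuous F) (v : n → ℝ) :
    gramIntegral F a b *ᵥ v = fun k => ∫ σ in a..b, ((F σ)ᵀ *ᵥ (F σ *ᵥ v)) k := by
  funext k
  calc (gramIntegral F a b *ᵥ v) k
      = v ⬝ᵥ fun l => ∫ σ in a..b, ((F σ)ᵀ * F σ) k l := dotProduct_comm _ _
    _ = ∫ σ in a..b, v ⬝ᵥ fun l => ((F σ)ᵀ * F σ) k l :=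
        dotProduct_intervalIntegral v _ fun l =>
          (by fun_prop : Continuous _).intervalIntegrable a b
    _ = ∫ σ in a..b, ((F σ)ᵀ *ᵥ (F σ *ᵥ v)) k := by
        congr 1 with σ
        rw [dotProduct_comm, mulVec_mulVec]
        rfl

theorem dotProduct_gramIntegral_mulVec (hF : Continuous F) (x : n → ℝ) :
    x ⬝ᵥ gramIntegral F a b *ᵥ x = ∫ σ in a..b, (F σ *ᵥ x) ⬝ᵥ (F σ *ᵥ x) := by
  rw [gramIntegral_mulVec hF, dotProduct_intervalIntegral x _ fun k =>
    (by fun_prop : Continuous _).intervalIntegrable a b]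
  congr 1 with σ
  rw [dotProduct_mulVec, vecMul_transpose]

theorem posSemidef_gramIntegral (hF : Continuous F) (hab : a ≤ b) :
    (gramIntegral F a b).PosSemidef :=
  .of_dotProduct_mulVec_nonneg isHermitian_gramIntegral fun x => by
    rw [star_trivial, dotProduct_gramIntegral_mulVec hF]
    exact integral_nonneg hab fun σ _ => Finset.sum_nonneg fun i _ => mul_self_nonneg _

theorem isUnit_smul_one_add_gramIntegral [DecidableEq n] (hF : Continuous F) (hab : a ≤ b)
    {ρ : ℝ} (hρ : 0 < ρ) : IsUnit (ρ • 1 + gramIntegral F a b) :=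
  ((PosDef.one.smul hρ).add_posSemidef (posSemidef_gramIntegral hF hab)).isUnit

end GramIntegral

theorem smul_add_mulVec_inv_sub_eq_zero {n : Type*} [Fintype n] [DecidableEq n] {ρ : ℝ}
    {G : Matrix n n ℝ} (h : IsUnit (ρ • 1 + G)) (θ : n → ℝ) :
    ρ • ((ρ • 1 + G)⁻¹ *ᵥ θ) + (G *ᵥ ((ρ • 1 + G)⁻¹ *ᵥ θ) - θ) = 0 := by
  have hθ : (ρ • 1 + G) *ᵥ ((ρ • 1 + G)⁻¹ *ᵥ θ) = θ := by
    rw [mulVec_mulVec, mul_nonsing_inv _ ((isUnit_iff_isUnit_det _).1 h), one_mulVec]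
  rw [add_mulVec, smul_mulVec, one_mulVec] at hθ
  rw [add_sub_assoc', hθ, sub_self]

theorem Gmat_eq_gramIntegral {n m : ℕ} (A : Matrix (Fin n) (Fin n) ℝ)
    (M : Matrix (Fin n) (Fin m) ℝ) (t_F : ℝ) :
    Gmat A M t_F = gramIntegral (Fmat A M t_F) 0 t_F :=
  rfl

theorem continuous_Fmat {n m : ℕ} (A : Matrix (Fin n) (Fin n) ℝ) (M : Matrix (Fin n) (Fin m) ℝ)
    (t_F : ℝ) : Continuous (Fmat A M t_F) := by
  have hexp : Continuous fun τ : ℝ => NormedSpace.exp ((t_F - τ) • Aᵀ) := by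
    -- any matrix norm will do: all of them induce the product topology
    let : NormedRing (Matrix (Fin n) (Fin n) ℝ) := Matrix.linftyOpNormedRing
    let : NormedAlgebra ℝ (Matrix (Fin n) (Fin n) ℝ) := Matrix.linftyOpNormedAlgebra
    let : NormedAlgebra ℚ (Matrix (Fin n) (Fin n) ℝ) := NormedAlgebra.restrictScalars ℚ ℝ _
    fun_prop
  exact continuous_const.matrix_mul hexp

/-- The matrix `ρI + G` is invertible for every `ρ > 0`, and
`u(τ) = F(τ)(ρI + G)⁻¹ θ̄` satisfies the optimality equation
`ρ u(τ) + F(τ)(∫₀^{t_F} F(σ)ᵀ u(σ) dσ − θ̄) = 0` for every `τ ∈ [0, t_F]`. -/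
theorem unconstrained_opt_control_formula
    {n m : ℕ} (A : Matrix (Fin n) (Fin n) ℝ) (M : Matrix (Fin n) (Fin m) ℝ)
    (t_F : ℝ) (ht : 0 < t_F) (ρ : ℝ) (hρ : 0 < ρ) (θbar : Fin n → ℝ)
    (u : ℝ → Fin m → ℝ)
    (hu : ∀ τ ∈ Set.Icc (0 : ℝ) t_F, u τ =
      (Fmat A M t_F τ).mulVec
        ((ρ • (1 : Matrix (Fin n) (Fin n) ℝ) + Gmat A M t_F)⁻¹.mulVec θbar)) :
    IsUnit (ρ • (1 : Matrix (Fin n) (Fin n) ℝ) + Gmat A M t_F) ∧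
    ∀ τ ∈ Set.Icc (0 : ℝ) t_F,
      ρ • u τ +
        (Fmat A M t_F τ).mulVec
          ((fun k => ∫ σ in (0 : ℝ)..t_F, (Fmat A M t_F σ)ᵀ.mulVec (u σ) k) - θbar)
        = 0 := by
  have hF := continuous_Fmat A M t_F
  have hS : IsUnit (ρ • 1 + Gmat A M t_F) := isUnit_smul_one_add_gramIntegral hF ht.le hρ
  refine ⟨hS, fun τ hτ => ?_⟩
  set v := (ρ • 1 + Gmat A M t_F)⁻¹ *ᵥ θbar
  have hGu : (fun k => ∫ σ in (0 : ℝ)..t_F, ((Fmat A M t_F σ)ᵀ *ᵥ u σ) k)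
      = Gmat A M t_F *ᵥ v := by
    rw [Gmat_eq_gramIntegral, gramIntegral_mulVec hF]
    funext k
    refine integral_congr fun σ hσ => ?_
    rw [Set.uIcc_of_le ht.le] at hσ
    simp only [hu σ hσ]
  rw [hu τ hτ, hGu, ← mulVec_smul, ← mulVec_add, smul_add_mulVec_inv_sub_eq_zero hS, mulVec_zero]
end

section
/- Suppose A is the diagonal matrix with diagonal entries d₁,…,d_n satisfying d_k + d_ℓ ≠ 0 for all k, ℓ. Then the matrix G = ∫₀^{t_F} exp(Aω) · M · Mᵀ · exp(Aᵀω) dω has entries G_{kℓ} = (exp((d_k + d_ℓ) t_F) − 1) / (d_k + d_ℓ) · (M·Mᵀ)_{kℓ} for all k, ℓ. -/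
open MeasureTheory intervalIntegral Matrix

/-! Since `exp (ω • diagonal d) = diagonal (fun i => e^{ω dᵢ})`, the `(k, l)` entry of the
integrand is `e^{(d_k + d_l) ω} (M Mᵀ)_{kl}`, an exponential that integrates in closed form. -/

theorem integral_exp_mul {c : ℝ} (hc : c ≠ 0) (a b : ℝ) :
    ∫ x in a..b, Real.exp (c * x) = (Real.exp (c * b) - Real.exp (c * a)) / c := by
  rw [integral_comp_mul_left (fun x => Real.exp x) hc, integral_exp, smul_eq_mul, inv_mul_eq_div]

namespace Matrix

variable {ι : Type*} [Fintype ι] [DecidableEq ι]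

theorem exp_smul_diagonal (t : ℝ) (d : ι → ℝ) :
    NormedSpace.exp (t • diagonal d) = diagonal fun i => Real.exp (t * d i) := by
  simp only [← diagonal_smul, exp_diagonal, Pi.exp_def, Pi.smul_apply, smul_eq_mul,
    Real.exp_eq_exp_ℝ]

theorem diagonal_mul_mul_diagonal_apply {m n α : Type*} [Fintype m] [DecidableEq m]
    [Fintype n] [DecidableEq n] [NonUnitalNonAssocSemiring α]
    (a : m → α) (N : Matrix m n α) (b : n → α) (k : m) (l : n) :
    (diagonal a * N * diagonal b) k l = a k * N k l * b l := by
  rw [mul_diagonal, diagonal_mul]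

theorem exp_smul_diagonal_mul_mul_exp_smul_transpose_apply (t : ℝ) (d : ι → ℝ)
    (N : Matrix ι ι ℝ) (k l : ι) :
    (NormedSpace.exp (t • diagonal d) * N * NormedSpace.exp (t • (diagonal d)ᵀ)) k l =
      Real.exp ((d k + d l) * t) * N k l := by
  rw [diagonal_transpose, exp_smul_diagonal, diagonal_mul_mul_diagonal_apply,
    add_mul, Real.exp_add, mul_comm (d k), mul_comm (d l)]
  ring

end Matrix

theorem gramian_entries_diagonal_case_general
    {n m : ℕ} (A : Matrix (Fin n) (Fin n) ℝ) (M : Matrix (Fin n) (Fin m) ℝ)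
    (t_F : ℝ)
    (d : Fin n → ℝ) (hA : A = Matrix.diagonal d)
    (hd : ∀ k l : Fin n, d k + d l ≠ 0)
    (G : Matrix (Fin n) (Fin n) ℝ)
    (hG : G = Matrix.of fun k l => ∫ ω in (0 : ℝ)..t_F,
        (NormedSpace.exp (ω • A) * M * Mᵀ * NormedSpace.exp (ω • Aᵀ)) k l) :
    ∀ k l : Fin n, G k l =
      (Real.exp ((d k + d l) * t_F) - 1) / (d k + d l) * (M * Mᵀ) k l := by
  intro k l
  have integrand (ω : ℝ) :
      (NormedSpace.exp (ω • A) * M * Mᵀ * NormedSpace.exp (ω • Aᵀ)) k l =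
        Real.exp ((d k + d l) * ω) * (M * Mᵀ) k l := by
    rw [Matrix.mul_assoc _ M, hA, exp_smul_diagonal_mul_mul_exp_smul_transpose_apply]
  rw [hG, of_apply, integral_congr fun ω _ => integrand ω, intervalIntegral.integral_mul_const,
    integral_exp_mul (hd k l), mul_zero, Real.exp_zero]

/-- If `A = diag(d₁,…,d_n)` with `d_k + d_ℓ ≠ 0` for all `k, ℓ`, then the matrix
`G = ∫₀^{t_F} exp(Aω) M Mᵀ exp(Aᵀω) dω` has entries
`G_{kℓ} = (exp((d_k + d_ℓ) t_F) − 1)/(d_k + d_ℓ) · (M Mᵀ)_{kℓ}`. -/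
theorem gramian_entries_diagonal_case
    {n m : ℕ} (A : Matrix (Fin n) (Fin n) ℝ) (M : Matrix (Fin n) (Fin m) ℝ)
    (t_F : ℝ) (ht : 0 < t_F)
    (d : Fin n → ℝ) (hA : A = Matrix.diagonal d)
    (hd : ∀ k l : Fin n, d k + d l ≠ 0)
    (G : Matrix (Fin n) (Fin n) ℝ)
    (hG : G = Matrix.of fun k l => ∫ ω in (0 : ℝ)..t_F,
        (NormedSpace.exp (ω • A) * M * Mᵀ * NormedSpace.exp (ω • Aᵀ)) k l) :
    ∀ k l : Fin n, G k l =
      (Real.exp ((d k + d l) * t_F) - 1) / (d k + d l) * (M * Mᵀ) k l :=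
  gramian_entries_diagonal_case_general A M t_F d hA hd G hG
end
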